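/- Let q ≥ 3 and let P_c = ∩_{π ∈ S_q} π·H_{≥ -c} where H_{≥ -c} = {x ∈ ℝ^{q-1} : Σ x_i ≥ -c} and S_q acts by the standard representation. Then P_c equals the convex hull of the q points (-c,0,…,0), (0,-c,0,…,0), …, (0,…,0,-c), and (c,c,…,c); moreover P_c = ∪_{π ∈ S_q} π·D_c, where D_c is the convex hull of (-c,0,…,0), …, (0,…,0,-c) and the origin. -/

import Mathlib

/-!
Lift `y ∈ ℝ^n` to `X = extZero n y ∈ ℝ^(n+1)`. Then `π • y` is `X ∘ π⁻¹` renormalised to vanish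
in the last slot, and `π • H_{≥ -c}` is the half-space `(n+1) X_{π(n+1)} ≤ c + ∑ X`. Hence `P_c` is
cut out by the `n+1` inequalities `(n+1) X_j ≤ c + ∑ X`, a set the action permutes, and explicit
barycentric coordinates identify it with the simplex on the given vertices. Every orbit meets the
nonpositive orthant (move a largest coordinate of `X` to the last slot), and on that orthant the
inequalities reduce to `∑ x ≥ -c`, i.e. to `D_c`.
-/

/-- Extension of a vector in `ℝ^n` to `ℝ^(n+1)` by appending a zero last coordinate. -/
def extZero (n : ℕ) (x : Fin n → ℝ) : Fin (n+1) → ℝ :=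
  fun j => if h : (j : ℕ) < n then x ⟨j, h⟩ else 0

/-- The standard representation of `S_{n+1}` on `ℝ^n`:
`(π·x)_i = X_{π⁻¹(i)} - X_{π⁻¹(n+1)}` where `X` is `x` extended by a zero last coordinate. -/
def stdAct (n : ℕ) (π : Equiv.Perm (Fin (n+1))) (x : Fin n → ℝ) : Fin n → ℝ :=
  fun i => extZero n x (π.symm i.castSucc) - extZero n x (π.symm (Fin.last n))

section ConvexHull

variable {ι : Type*} [Fintype ι] {c : ℝ}

lemma convex_setOf_nonpos_and_sum_ge (c : ℝ) :
    Convex ℝ {x : ι → ℝ | x ≤ 0 ∧ -c ≤ ∑ i, x i} := by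
  have hsum : IsLinearMap ℝ fun x : ι → ℝ => ∑ i, x i := by
    constructor <;> intros <;> simp [Finset.sum_add_distrib, Finset.mul_sum]
  exact (convex_Iic 0).inter (convex_halfSpace_ge hsum (-c))

/-- Barycentric coordinates: weight `t` on `p` and `(t * p k - y k) / c` on `-c • e k`. -/
lemma mem_convexHull_range_single_union [DecidableEq ι] (hc : 0 < c) {p y : ι → ℝ} {t : ℝ}
    (ht : 0 ≤ t) (hy : ∀ i, y i ≤ t * p i) (hsum : ∑ i, (t * p i - y i) = c * (1 - t)) :
    y ∈ convexHull ℝ (Set.range (fun k => (Pi.single k (-c) : ι → ℝ)) ∪ {p}) := by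
  let w : Option ι → ℝ := fun o => o.elim t fun k => (t * p k - y k) / c
  let z : Option ι → ι → ℝ := fun o => o.elim p fun k => Pi.single k (-c)
  have hw : ∀ o ∈ Finset.univ, 0 ≤ w o := by
    rintro (_ | k) -
    exacts [ht, div_nonneg (sub_nonneg.2 (hy k)) hc.le]
  have hw1 : ∑ o, w o = 1 := by
    rw [Fintype.sum_option]
    simp only [w, Option.elim_none, Option.elim_some, ← Finset.sum_div, hsum]
    field_simp
    ring
  have hz : ∀ o ∈ Finset.univ, z o ∈ Set.range (fun k => (Pi.single k (-c) : ι → ℝ)) ∪ {p} := by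
    rintro (_ | k) -
    exacts [Or.inr rfl, Or.inl ⟨k, rfl⟩]
  have hyz : ∑ o, w o • z o = y := by
    funext i
    rw [Fintype.sum_option]
    simp only [w, z, Option.elim_none, Option.elim_some, Pi.add_apply, Finset.sum_apply,
      Pi.smul_apply, smul_eq_mul, Pi.single_apply, mul_ite, mul_zero, Finset.sum_ite_eq,
      Finset.mem_univ, if_true]
    field_simp
    ring
  exact hyz ▸ (convex_convexHull ℝ _).sum_mem hw hw1 fun o ho => subset_convexHull ℝ _ (hz o ho)

lemma convexHull_range_single_union_zero [DecidableEq ι] (hc : 0 ≤ c) :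
    convexHull ℝ (Set.range (fun k => (Pi.single k (-c) : ι → ℝ)) ∪ {0}) =
      {x | x ≤ 0 ∧ -c ≤ ∑ i, x i} := by
  refine (convexHull_min ?_ (convex_setOf_nonpos_and_sum_ge c)).antisymm ?_
  · rintro _ (⟨k, rfl⟩ | rfl)
    · refine ⟨fun i => ?_, by simp⟩
      rcases eq_or_ne i k with rfl | hik
      · simpa using hc
      · simp [Pi.single_eq_of_ne hik]
    · simpa using hc
  · rintro x ⟨hx, hsum⟩
    rcases hc.eq_or_lt with rfl | hc
    · rw [(Fintype.sum_eq_zero_iff_of_nonpos hx).1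
        (le_antisymm (Fintype.sum_nonpos hx) (by simpa using hsum))]
      exact subset_convexHull ℝ _ (Or.inr rfl)
    · refine mem_convexHull_range_single_union hc (t := 1 + (∑ i, x i) / c) ?_
        (fun i => by simpa using hx i) ?_
      · have : -1 ≤ (∑ i, x i) / c := by rw [le_div_iff₀ hc]; linarith
        linarith
      · simp only [Pi.zero_apply, mul_zero, zero_sub, Finset.sum_neg_distrib]
        field_simp
        ring

end ConvexHull

section StdAct

variable {n : ℕ}

@[simp]
lemma extZero_castSucc (x : Fin n → ℝ) (i : Fin n) : extZero n x i.castSucc = x i := by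
  simp [extZero]

@[simp]
lemma extZero_last (x : Fin n → ℝ) : extZero n x (Fin.last n) = 0 := by
  simp [extZero]

lemma sum_extZero (x : Fin n → ℝ) : ∑ j, extZero n x j = ∑ i, x i := by
  simp [Fin.sum_univ_castSucc]

lemma extZero_stdAct (π : Equiv.Perm (Fin (n+1))) (x : Fin n → ℝ) (j : Fin (n+1)) :
    extZero n (stdAct n π x) j = extZero n x (π.symm j) - extZero n x (π.symm (Fin.last n)) := by
  induction j using Fin.lastCases with
  | last => simp
  | cast i => simp [stdAct]

lemma stdAct_mul (π σ : Equiv.Perm (Fin (n+1))) (x : Fin n → ℝ) :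
    stdAct n π (stdAct n σ x) = stdAct n (π * σ) x := by
  funext i
  simp only [stdAct, extZero_stdAct, Equiv.Perm.mul_def, Equiv.symm_trans_apply]
  ring

lemma stdAct_one (x : Fin n → ℝ) : stdAct n 1 x = x := by
  funext i
  simp [stdAct, ← Equiv.Perm.inv_def]

lemma mem_stdAct_image_iff {π : Equiv.Perm (Fin (n+1))} {S : Set (Fin n → ℝ)}
    {y : Fin n → ℝ} : y ∈ stdAct n π '' S ↔ stdAct n π⁻¹ y ∈ S := by
  constructor
  · rintro ⟨x, hx, rfl⟩
    rwa [stdAct_mul, inv_mul_cancel, stdAct_one]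
  · exact fun h => ⟨_, h, by rw [stdAct_mul, mul_inv_cancel, stdAct_one]⟩

lemma sum_stdAct (π : Equiv.Perm (Fin (n+1))) (x : Fin n → ℝ) :
    ∑ i, stdAct n π x i = ∑ i, x i - (n + 1) * extZero n x (π.symm (Fin.last n)) := by
  have h := sum_extZero (stdAct n π x)
  simp only [extZero_stdAct, Finset.sum_sub_distrib, Equiv.sum_comp π.symm (extZero n x),
    sum_extZero, Finset.sum_const, Finset.card_univ, Fintype.card_fin, nsmul_eq_mul] at h
  push_cast at h
  linarith

lemma exists_stdAct_nonpos (y : Fin n → ℝ) : ∃ π, stdAct n π y ≤ 0 := by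
  obtain ⟨j₀, hj₀⟩ := Finite.exists_max (extZero n y)
  refine ⟨Equiv.swap (Fin.last n) j₀, fun i => ?_⟩
  simp only [stdAct, Equiv.symm_swap, Equiv.swap_apply_left, Pi.zero_apply]
  linarith [hj₀ (Equiv.swap (Fin.last n) j₀ i.castSucc)]

end StdAct

def stdPolytope (n : ℕ) (c : ℝ) : Set (Fin n → ℝ) :=
  {y | ∀ j, (n + 1) * extZero n y j ≤ c + ∑ i, y i}

section StdPolytope

variable {n : ℕ} {c : ℝ}

lemma mem_stdPolytope_iff {y : Fin n → ℝ} :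
    y ∈ stdPolytope n c ↔ (∀ i, (n + 1) * y i ≤ c + ∑ i, y i) ∧ -c ≤ ∑ i, y i := by
  simp only [stdPolytope, Set.mem_ofPred_eq, Fin.forall_fin_succ', extZero_castSucc, extZero_last]
  refine and_congr Iff.rfl ⟨fun h => ?_, fun h => ?_⟩ <;> linarith

lemma stdAct_mem_stdPolytope_iff {π : Equiv.Perm (Fin (n+1))} {x : Fin n → ℝ} :
    stdAct n π x ∈ stdPolytope n c ↔ x ∈ stdPolytope n c := by
  simp only [stdPolytope, Set.mem_ofPred_eq, extZero_stdAct, sum_stdAct]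
  rw [Equiv.forall_congr_left π.symm]
  refine forall_congr' fun j => ?_
  simp only [Equiv.symm_symm, Equiv.symm_apply_apply]
  constructor <;> intro h <;> linarith

lemma iInter_stdAct_image_sum_ge (n : ℕ) (c : ℝ) :
    ⋂ π : Equiv.Perm (Fin (n+1)), stdAct n π '' {x | -c ≤ ∑ i, x i} = stdPolytope n c := by
  ext y
  simp only [Set.mem_iInter, mem_stdAct_image_iff, Set.mem_ofPred_eq, sum_stdAct,
    Equiv.Perm.inv_def, Equiv.symm_symm, stdPolytope]
  constructor
  · intro h j
    have := h (Equiv.swap (Fin.last n) j)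
    rw [Equiv.swap_apply_left] at this
    linarith
  · intro h π
    linarith [h (π (Fin.last n))]

lemma stdPolytope_inter_Iic_zero (n : ℕ) (c : ℝ) :
    stdPolytope n c ∩ Set.Iic 0 = {x | x ≤ 0 ∧ -c ≤ ∑ i, x i} := by
  ext x
  simp only [Set.mem_inter_iff, mem_stdPolytope_iff, Set.mem_Iic, Set.mem_ofPred_eq]
  constructor
  · exact fun ⟨⟨_, hsum⟩, hx⟩ => ⟨hx, hsum⟩
  · refine fun ⟨hx, hsum⟩ => ⟨⟨fun i => ?_, hsum⟩, hx⟩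
    have : (n + 1 : ℝ) * x i ≤ 0 := mul_nonpos_of_nonneg_of_nonpos (by positivity) (hx i)
    linarith

lemma iUnion_stdAct_image_inter_Iic_zero (n : ℕ) (c : ℝ) :
    ⋃ π : Equiv.Perm (Fin (n+1)), stdAct n π '' (stdPolytope n c ∩ Set.Iic 0) =
      stdPolytope n c := by
  ext y
  simp only [Set.mem_iUnion, mem_stdAct_image_iff, Set.mem_inter_iff, stdAct_mem_stdPolytope_iff,
    Set.mem_Iic]
  constructor
  · exact fun ⟨_, hy, _⟩ => hy
  · intro hy
    obtain ⟨π, hπ⟩ := exists_stdAct_nonpos y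
    exact ⟨π⁻¹, hy, by rwa [inv_inv]⟩

lemma convex_stdPolytope (n : ℕ) (c : ℝ) : Convex ℝ (stdPolytope n c) := by
  intro x hx y hy a b ha hb hab
  rw [mem_stdPolytope_iff] at hx hy ⊢
  simp only [Pi.add_apply, Pi.smul_apply, smul_eq_mul, Finset.sum_add_distrib, ← Finset.mul_sum]
  have hc : c = a * c + b * c := by rw [← add_mul, hab, one_mul]
  refine ⟨fun i => ?_, ?_⟩
  · nlinarith [mul_le_mul_of_nonneg_left (hx.1 i) ha, mul_le_mul_of_nonneg_left (hy.1 i) hb]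
  · nlinarith [mul_le_mul_of_nonneg_left hx.2 ha, mul_le_mul_of_nonneg_left hy.2 hb]

lemma eq_zero_of_mem_stdPolytope_zero {y : Fin n → ℝ} (hy : y ∈ stdPolytope n 0) : y = 0 := by
  rw [← iUnion_stdAct_image_inter_Iic_zero, stdPolytope_inter_Iic_zero] at hy
  obtain ⟨π, x, ⟨hx, hsum⟩, rfl⟩ := Set.mem_iUnion.1 hy
  obtain rfl : x = 0 := (Fintype.sum_eq_zero_iff_of_nonpos hx).1
    (le_antisymm (Fintype.sum_nonpos hx) (by simpa using hsum))
  funext i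
  simp [stdAct, extZero]

lemma convexHull_range_single_union_const (hc : 0 ≤ c) :
    convexHull ℝ (Set.range (fun k : Fin n => (Pi.single k (-c) : Fin n → ℝ)) ∪ {fun _ => c}) =
      stdPolytope n c := by
  refine (convexHull_min ?_ (convex_stdPolytope n c)).antisymm ?_
  · rintro _ (⟨k, rfl⟩ | rfl) <;> rw [mem_stdPolytope_iff]
    · refine ⟨fun i => ?_, by simp⟩
      rcases eq_or_ne i k with rfl | hik
      · simp only [Pi.single_eq_same, Finset.sum_pi_single', Finset.mem_univ, if_true]
        nlinarith
      · simp [Pi.single_eq_of_ne hik]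
    · simp only [Finset.sum_const, Finset.card_univ, Fintype.card_fin, nsmul_eq_mul]
      exact ⟨fun _ => by linarith, by nlinarith [(n.cast_nonneg : (0 : ℝ) ≤ n)]⟩
  · intro y hy
    rcases hc.eq_or_lt with rfl | hc
    · rw [eq_zero_of_mem_stdPolytope_zero hy]
      exact subset_convexHull ℝ _ (Or.inr rfl)
    rw [mem_stdPolytope_iff] at hy
    refine mem_convexHull_range_single_union hc (t := (c + ∑ i, y i) / ((n + 1) * c))
      (div_nonneg (by linarith [hy.2]) (by positivity)) (fun i => ?_) ?_
    · rw [div_mul_eq_mul_div, le_div_iff₀ (by positivity)]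
      nlinarith [hy.1 i]
    · simp only [Finset.sum_sub_distrib, Finset.sum_const, Finset.card_univ, Fintype.card_fin,
        nsmul_eq_mul]
      field_simp
      ring

end StdPolytope

theorem stmt_18_general (n : ℕ) (c : ℝ) (hc : 0 ≤ c) :
    let H : Set (Fin n → ℝ) := {x | -c ≤ ∑ i, x i}
    let P : Set (Fin n → ℝ) := ⋂ π : Equiv.Perm (Fin (n+1)), stdAct n π '' H
    let verts : Set (Fin n → ℝ) :=
      (Set.range fun k : Fin n => (Pi.single k (-c) : Fin n → ℝ)) ∪ {fun _ => c}
    let D : Set (Fin n → ℝ) :=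
      convexHull ℝ ((Set.range fun k : Fin n => (Pi.single k (-c) : Fin n → ℝ)) ∪ {0})
    P = convexHull ℝ verts ∧ P = ⋃ π : Equiv.Perm (Fin (n+1)), stdAct n π '' D := by
  intro H P verts D
  have hP : P = stdPolytope n c := iInter_stdAct_image_sum_ge n c
  have hD : D = stdPolytope n c ∩ Set.Iic 0 := by
    rw [stdPolytope_inter_Iic_zero]
    exact convexHull_range_single_union_zero hc
  refine ⟨hP.trans (convexHull_range_single_union_const hc).symm, ?_⟩
  rw [hD, iUnion_stdAct_image_inter_Iic_zero]
  exact hP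

theorem stmt_18 (n : ℕ) (hn : 2 ≤ n) (c : ℝ) (hc : 0 ≤ c) :
    let H : Set (Fin n → ℝ) := {x | -c ≤ ∑ i, x i}
    let P : Set (Fin n → ℝ) := ⋂ π : Equiv.Perm (Fin (n+1)), stdAct n π '' H
    let verts : Set (Fin n → ℝ) :=
      (Set.range fun k : Fin n => (Pi.single k (-c) : Fin n → ℝ)) ∪ {fun _ => c}
    let D : Set (Fin n → ℝ) :=
      convexHull ℝ ((Set.range fun k : Fin n => (Pi.single k (-c) : Fin n → ℝ)) ∪ {0})
    P = convexHull ℝ verts ∧ P = ⋃ π : Equiv.Perm (Fin (n+1)), stdAct n π '' D :=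
  stmt_18_general n c hc
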